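/- arXiv:2111.08945 — 3 statements merged into one kernel-verified Lean document; each statement's English description precedes it below -/
import Mathlib

section
/- If T is a tree of order n, then C(T) = n if and only if T is a path on at most 4 vertices. -/
open SimpleGraph

attribute [local instance] Classical.propDecidable

def Dominates {V : Type*} (G : SimpleGraph V) (S : Set V) : Prop :=
  ∀ v, v ∉ S → ∃ u ∈ S, G.Adj u v

def Coalition {V : Type*} (G : SimpleGraph V) (A B : Set V) : Prop :=
  Disjoint A B ∧ ¬ Dominates G A ∧ ¬ Dominates G B ∧ Dominates G (A ∪ B)

def IsCoalitionPartition {V : Type*} (G : SimpleGraph V) (P : Finset (Set V)) : Prop :=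
  (∀ A ∈ P, A.Nonempty) ∧
  (∀ A ∈ P, ∀ B ∈ P, A ≠ B → Disjoint A B) ∧
  (∀ v : V, ∃ A ∈ P, v ∈ A) ∧
  (∀ A ∈ P, (Dominates G A ∧ ∃ v, A = {v}) ∨
    (¬ Dominates G A ∧ ∃ B ∈ P, B ≠ A ∧ Coalition G A B))

noncomputable def coalitionNumber {V : Type*} (G : SimpleGraph V) : ℕ :=
  sSup {n | ∃ P : Finset (Set V), IsCoalitionPartition G P ∧ P.card = n}

def coalitionGraph {V : Type*} (G : SimpleGraph V) (P : Finset (Set V)) :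
    SimpleGraph {A : Set V // A ∈ P} where
  Adj A B := Coalition G A.1 B.1
  symm := by
    constructor
    rintro A B ⟨d, na, nb, u⟩
    exact ⟨d.symm, nb, na, by rwa [Set.union_comm]⟩
  loopless := by
    constructor
    rintro ⟨A, hA⟩ ⟨d, na, nb, u⟩
    rw [Set.union_self] at u
    exact na u


/-!
If `C(G) = n`, a coalition partition with `n` parts consists of singletons, so `C(G) = n` exactly
when every vertex dominates alone or forms a coalition with a single other vertex.

In a tree with this property, take a longest path from `a` to `b`. If `v` lies off the path, then
`v` is adjacent to neither end. If the path has length at least 3, no pair `{v, u}` dominates: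
`u` would have to cover both `a` and `b`, but these have no common neighbour. If the path has
length 2, the tree is a star with at least three leaves. Then a leaf has no partner: the centre
dominates alone, and any other leaf fails to cover a third one. So the longest path covers every
vertex. A path of length at least 4 is excluded by the same argument applied to its third
vertex. Conversely, `P₁, …, P₄` are checked directly.
-/

def SingletonsCoalesce {V : Type*} (G : SimpleGraph V) : Prop :=
  ∀ v, Dominates G {v} ∨ ∃ u, Coalition G {v} {u}

section CoalitionNumber

variable {V : Type*} {G : SimpleGraph V} {P : Finset (Set V)}

theorem IsCoalitionPartition.eq_of_mem (hP : IsCoalitionPartition G P) {A B : Set V} {v : V}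
    (hA : A ∈ P) (hB : B ∈ P) (hvA : v ∈ A) (hvB : v ∈ B) : A = B := by
  by_contra hAB
  exact (hP.2.1 A hA B hB hAB).ne_of_mem hvA hvB rfl

theorem IsCoalitionPartition.exists_part (hP : IsCoalitionPartition G P) :
    ∃ part : V → P, Function.Surjective part ∧ ∀ v, v ∈ (part v : Set V) := by
  choose A hA hvA using hP.2.2.1
  refine ⟨fun v => ⟨A v, hA v⟩, fun B => ?_, hvA⟩
  obtain ⟨b, hb⟩ := hP.1 B B.2
  exact ⟨b, Subtype.ext (hP.eq_of_mem (hA b) B.2 (hvA b) hb)⟩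

variable [Fintype V]

theorem IsCoalitionPartition.card_le (hP : IsCoalitionPartition G P) :
    P.card ≤ Fintype.card V := by
  obtain ⟨part, hsurj, -⟩ := hP.exists_part
  simpa using Fintype.card_le_of_surjective part hsurj

theorem IsCoalitionPartition.exists_eq_singleton (hP : IsCoalitionPartition G P)
    (hcard : P.card = Fintype.card V) {A : Set V} (hA : A ∈ P) : ∃ v, A = {v} := by
  obtain ⟨part, hsurj, hmem⟩ := hP.exists_part
  have hinj : Function.Injective part :=
    ((Fintype.bijective_iff_surjective_and_card part).2 ⟨hsurj, by simpa using hcard.symm⟩).1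
  have hpart : ∀ {v}, v ∈ A → (part v : Set V) = A := fun hv =>
    hP.eq_of_mem (part _).2 hA (hmem _) hv
  obtain ⟨a, ha⟩ := hP.1 A hA
  refine ⟨a, Set.eq_singleton_iff_unique_mem.2 ⟨ha, fun x hx => hinj ?_⟩⟩
  exact Subtype.ext ((hpart hx).trans (hpart ha).symm)

theorem IsCoalitionPartition.singletonsCoalesce (hP : IsCoalitionPartition G P)
    (hcard : P.card = Fintype.card V) : SingletonsCoalesce G := by
  intro v
  obtain ⟨A, hA, hvA⟩ := hP.2.2.1 v
  obtain ⟨a, rfl⟩ := hP.exists_eq_singleton hcard hA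
  obtain rfl : v = a := hvA
  rcases hP.2.2.2 _ hA with ⟨hdom, -⟩ | ⟨-, B, hB, -, hcoal⟩
  · exact Or.inl hdom
  · obtain ⟨u, rfl⟩ := hP.exists_eq_singleton hcard hB
    exact Or.inr ⟨u, hcoal⟩

theorem SingletonsCoalesce.isCoalitionPartition (hG : SingletonsCoalesce G) :
    IsCoalitionPartition G (Finset.univ.image fun v => ({v} : Set V)) := by
  simp only [IsCoalitionPartition, Finset.mem_image, Finset.mem_univ, true_and,
    forall_exists_index, forall_apply_eq_imp_iff, exists_exists_eq_and]
  refine ⟨fun v => Set.singleton_nonempty v, fun v u hvu => ?_, fun v => ⟨v, rfl⟩, fun v => ?_⟩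
  · exact Set.disjoint_singleton.2 fun h => hvu (h ▸ rfl)
  · rcases hG v with hdom | ⟨u, hcoal⟩
    · exact Or.inl ⟨hdom, v, rfl⟩
    · refine Or.inr ⟨hcoal.2.1, u, fun h => ?_, hcoal⟩
      exact Set.disjoint_singleton.1 hcoal.1 (Set.singleton_eq_singleton_iff.1 h).symm

theorem coalitionNumber_eq_card_iff :
    coalitionNumber G = Fintype.card V ↔ SingletonsCoalesce G := by
  set S := {n | ∃ P : Finset (Set V), IsCoalitionPartition G P ∧ P.card = n}
  have hcn : coalitionNumber G = sSup S := rfl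
  have hbdd : ∀ n ∈ S, n ≤ Fintype.card V := by
    rintro _ ⟨P, hP, rfl⟩
    exact hP.card_le
  constructor
  · intro h
    rcases isEmpty_or_nonempty V with hV | hV
    · exact fun v => isEmptyElim v
    have hS : S.Nonempty := Set.nonempty_iff_ne_empty.2 fun hS => by
      rw [hcn, hS, csSup_empty] at h
      exact Fintype.card_ne_zero h.symm
    obtain ⟨P, hP, hcard⟩ : Fintype.card V ∈ S := h ▸ hcn ▸ Nat.sSup_mem hS ⟨_, hbdd⟩
    exact hP.singletonsCoalesce hcard
  · intro hG
    have hmem : Fintype.card V ∈ S := ⟨_, hG.isCoalitionPartition, by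
      rw [Finset.card_image_of_injective _ Set.singleton_injective, Finset.card_univ]⟩
    exact hcn ▸ IsGreatest.csSup_eq ⟨hmem, hbdd⟩

end CoalitionNumber

section Iso

variable {V W : Type*} {G : SimpleGraph V} {H : SimpleGraph W}

theorem dominates_image_iff (e : G ≃g H) (S : Set V) : Dominates H (e '' S) ↔ Dominates G S := by
  constructor
  · intro h v hv
    obtain ⟨_, ⟨u, hu, rfl⟩, hadj⟩ := h (e v) (by rwa [e.injective.mem_set_image])
    exact ⟨u, hu, e.map_adj_iff.1 hadj⟩
  · intro h w hw
    obtain ⟨u, hu, hadj⟩ := h (e.symm w) fun hw' => hw ⟨_, hw', e.apply_symm_apply w⟩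
    exact ⟨e u, ⟨u, hu, rfl⟩, by simpa using e.map_adj_iff.2 hadj⟩

theorem coalition_image_iff (e : G ≃g H) (A B : Set V) :
    Coalition H (e '' A) (e '' B) ↔ Coalition G A B := by
  simp only [Coalition, ← Set.image_union, dominates_image_iff, Set.disjoint_image_iff e.injective]

theorem SingletonsCoalesce.of_iso (hH : SingletonsCoalesce H) (e : G ≃g H) :
    SingletonsCoalesce G := by
  intro v
  rcases hH (e v) with hdom | ⟨u, hcoal⟩
  · rw [← Set.image_singleton, dominates_image_iff] at hdom
    exact Or.inl hdom
  · rw [← e.apply_symm_apply u, ← Set.image_singleton, ← Set.image_singleton,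
      coalition_image_iff] at hcoal
    exact Or.inr ⟨_, hcoal⟩

end Iso

theorem singletonsCoalesce_pathGraph {n : ℕ} (hn : n ≤ 4) : SingletonsCoalesce (pathGraph n) := by
  simp only [SingletonsCoalesce, Coalition, Dominates, pathGraph_adj, Set.mem_singleton_iff,
    Set.mem_union, Set.disjoint_singleton, exists_eq_or_imp, exists_eq_left]
  interval_cases n <;> decide

namespace SimpleGraph

variable {V : Type*} {G : SimpleGraph V}

theorem dominates_singleton_union_singleton_iff {v u : V} :
    Dominates G ({v} ∪ {u}) ↔ ∀ w, w = v ∨ w = u ∨ G.Adj v w ∨ G.Adj u w := by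
  simp only [Dominates, Set.mem_union, Set.mem_singleton_iff, exists_eq_or_imp, exists_eq_left]
  exact forall_congr' fun w => by tauto

theorem not_singletonsCoalesce_of_dist {v p q : V} (hvp : 2 ≤ G.dist v p) (hvq : 2 ≤ G.dist v q)
    (hpq : 3 ≤ G.dist p q) : ¬ SingletonsCoalesce G := by
  have dist_le_one_of_adj {x y : V} (h : G.Adj x y) : G.dist x y ≤ 1 := (dist_eq_one_iff_adj.2 h).le
  have hcover {u : V} (hdom : Dominates G ({v} ∪ {u})) {w : V} (hvw : 2 ≤ G.dist v w) :
      w = u ∨ G.Adj u w := by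
    rcases dominates_singleton_union_singleton_iff.1 hdom w with rfl | h | h | h
    · simp at hvw
    · exact .inl h
    · exact absurd (dist_le_one_of_adj h) (by omega)
    · exact .inr h
  intro hG
  obtain ⟨u, hdom⟩ : ∃ u, Dominates G ({v} ∪ {u}) := by
    rcases hG v with hdom | ⟨u, hcoal⟩
    · exact ⟨v, by rwa [Set.union_self]⟩
    · exact ⟨u, hcoal.2.2.2⟩
  rcases hcover hdom hvp with rfl | hp <;> rcases hcover hdom hvq with rfl | hq
  · simp at hpq
  · have := dist_le_one_of_adj hq; omega
  · have := dist_le_one_of_adj hp.symm; omega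
  · have := dist_le (.cons hp.symm (.cons hq .nil))
    simp only [Walk.length_cons, Walk.length_nil] at this
    omega

theorem not_singletonsCoalesce_of_three_pendant {c x y z : V} (hcx : G.Adj c x)
    (hx : ∀ u, G.Adj u x → u = c) (hy : ∀ u, G.Adj u y → u = c) (hz : ∀ u, G.Adj u z → u = c)
    (hxy : x ≠ y) (hxz : x ≠ z) (hyz : y ≠ z) : ¬ SingletonsCoalesce G := by
  intro hG
  rcases hG x with hdom | ⟨u, -, -, hndom, hdom⟩
  · obtain ⟨s, hs, hsy⟩ := hdom y hxy.symm
    exact hcx.ne ((hy s hsy).symm.trans hs)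
  rw [dominates_singleton_union_singleton_iff] at hdom
  by_cases huc : u = c
  · subst huc
    refine hndom fun w hw => ⟨u, rfl, ?_⟩
    rcases hdom w with rfl | rfl | h | h
    · exact hcx
    · exact absurd rfl hw
    · exact absurd (hx w h.symm) hw
    · exact h
  · obtain ⟨w, hw, hwx, hwu⟩ : ∃ w, (∀ s, G.Adj s w → s = c) ∧ w ≠ x ∧ w ≠ u := by
      by_cases huy : u = y
      · exact ⟨z, hz, hxz.symm, huy ▸ hyz.symm⟩
      · exact ⟨y, hy, hxy.symm, Ne.symm huy⟩
    rcases hdom w with h | h | h | h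
    · exact hwx h
    · exact hwu h
    · exact hcx.ne (hw x h).symm
    · exact huc (hw u h)

namespace Walk

theorem dist_getVert_getVert_of_length_eq_dist {u v : V} {p : G.Walk u v}
    (hp : p.length = G.dist u v) {i j : ℕ} (hij : i ≤ j) (hj : j ≤ p.length) :
    G.dist (p.getVert i) (p.getVert j) = j - i := by
  have hsub : ((p.drop i).take (j - i)).IsSubwalk p :=
    (isSubwalk_take _ _).trans (isSubwalk_drop _ _)
  have := length_eq_dist_of_subwalk hp hsub
  rw [take_length, drop_length, drop_getVert, Nat.add_sub_cancel' hij] at this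
  omega

theorem nonempty_iso_pathGraph_of_length_eq_dist {u v : V} {p : G.Walk u v}
    (hp : p.length = G.dist u v) (hspan : ∀ w, w ∈ p.support) :
    Nonempty (G ≃g pathGraph (p.length + 1)) := by
  have hdist (i j : Fin (p.length + 1)) :
      G.dist (p.getVert i) (p.getVert j) = max i.val j.val - min i.val j.val := by
    rcases le_total (i : ℕ) j with h | h
    · rw [dist_getVert_getVert_of_length_eq_dist hp h (by omega)]; omega
    · rw [dist_comm, dist_getVert_getVert_of_length_eq_dist hp h (by omega)]; omega
  have hbij : Function.Bijective fun i : Fin (p.length + 1) => p.getVert i := by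
    refine ⟨fun i j hij => ?_, fun w => ?_⟩
    · have := hdist i j
      simp only at hij
      rw [hij, dist_self] at this
      exact Fin.ext (by omega)
    · obtain ⟨n, rfl, hn⟩ := mem_support_iff_exists_getVert.1 (hspan w)
      exact ⟨⟨n, by omega⟩, rfl⟩
  refine ⟨(⟨Equiv.ofBijective _ hbij, fun {i j} => ?_⟩ : pathGraph (p.length + 1) ≃g G).symm⟩
  rw [Equiv.ofBijective_apply, Equiv.ofBijective_apply, ← dist_eq_one_iff_adj, hdist,
    pathGraph_adj]
  omega

end Walk

theorem not_singletonsCoalesce_of_four_le_dist {a b : V} (h : 4 ≤ G.dist a b) :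
    ¬ SingletonsCoalesce G := by
  have hr : G.Reachable a b := Reachable.of_dist_ne_zero (by omega)
  obtain ⟨p, hp⟩ := hr.exists_walk_length_eq_dist
  have h₁ := Walk.dist_getVert_getVert_of_length_eq_dist hp (i := 0) (j := 2) (by omega) (by omega)
  have h₂ := Walk.dist_getVert_getVert_of_length_eq_dist hp (i := 2) (by omega) le_rfl
  simp only [Walk.getVert_zero, Walk.getVert_length] at h₁ h₂
  exact not_singletonsCoalesce_of_dist (v := p.getVert 2) (p := a) (q := b)
    (by rw [dist_comm]; omega) (by omega) (by omega)

section Tree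

variable {T : SimpleGraph V}

theorem IsAcyclic.dist_eq_length (hT : T.IsAcyclic) {u v : V} {p : T.Walk u v} (hp : p.IsPath) :
    T.dist u v = p.length := by
  obtain ⟨q, hq, hlen⟩ := p.reachable.exists_path_of_dist
  have hpq : p = q := congrArg Subtype.val ((hT.subsingleton_path u v).elim ⟨p, hp⟩ ⟨q, hq⟩)
  rw [← hlen, hpq]

theorem IsAcyclic.not_adj_of_not_mem_support (hT : T.IsAcyclic) {a b v : V} {p : T.Walk a b}
    (hp : p.IsPath) (hmax : ∀ x y, T.dist x y ≤ p.length) (hv : v ∉ p.support) :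
    ¬ T.Adj v a := fun h => by
  have := hT.dist_eq_length ((Walk.cons_isPath_iff h p).2 ⟨hp, hv⟩)
  have := hmax v b
  simp only [Walk.length_cons] at *
  omega

theorem IsAcyclic.eq_of_adj_of_dist_eq_two (hT : T.IsAcyclic) (hmax : ∀ x y, T.dist x y ≤ 2)
    {x c y u : V} (hxc : T.Adj x c) (hcy : T.Adj c y) (hxy : T.dist x y = 2) (hux : T.Adj u x) :
    u = c := by
  have hxy' : x ≠ y := by rintro rfl; simp at hxy
  let q : T.Walk x y := .cons hxc (.cons hcy .nil)
  have hq : q.IsPath := by simp [q, hxc.ne, hcy.ne, hxy']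
  by_contra huc
  refine hT.not_adj_of_not_mem_support hq hmax ?_ hux
  have huy : u ≠ y := by rintro rfl; rw [dist_eq_one_iff_adj.2 hux.symm] at hxy; simp at hxy
  simp [q, hux.ne, huc, huy]

theorem IsTree.not_singletonsCoalesce_of_diam_two (hT : T.IsTree) (hmax : ∀ x y, T.dist x y ≤ 2)
    {a m b v : V} (ham : T.Adj a m) (hmb : T.Adj m b) (hab : T.dist a b = 2) (hva : v ≠ a)
    (hvm : v ≠ m) (hvb : v ≠ b) : ¬ SingletonsCoalesce T := by
  have hpa (u : V) := hT.isAcyclic.eq_of_adj_of_dist_eq_two hmax ham hmb hab (u := u)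
  have hpb (u : V) := hT.isAcyclic.eq_of_adj_of_dist_eq_two hmax hmb.symm ham.symm
    (by rwa [dist_comm]) (u := u)
  have hva2 : T.dist v a = 2 := le_antisymm (hmax v a)
    (hT.connected.one_lt_dist_of_ne_of_not_adj hva fun h => hvm (hpa v h))
  have hedist : T.edist v a = 2 := by
    rw [← (hT.connected v a).coe_dist_eq_edist, hva2]
    rfl
  obtain ⟨-, -, c, hvc, hac⟩ := edist_eq_two_iff.1 hedist
  obtain rfl := hpa c hac.symm
  have hpv (u : V) := hT.isAcyclic.eq_of_adj_of_dist_eq_two hmax hvc ham.symm hva2 (u := u)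
  have hab' : a ≠ b := by rintro rfl; simp at hab
  exact not_singletonsCoalesce_of_three_pendant ham.symm hpa hpb hpv hab' hva.symm hvb.symm

theorem IsTree.not_singletonsCoalesce_of_not_mem_support (hT : T.IsTree) {a b v : V}
    {p : T.Walk a b} (hp : p.IsPath) (hmax : ∀ x y, T.dist x y ≤ p.length) (hv : v ∉ p.support) :
    ¬ SingletonsCoalesce T := by
  have hlen : T.dist a b = p.length := hT.isAcyclic.dist_eq_length hp
  have hne {w : V} (hw : w ∈ p.support) : v ≠ w := fun h => hv (h ▸ hw)
  have hva : 2 ≤ T.dist v a := hT.connected.one_lt_dist_of_ne_of_not_adj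
    (hne p.start_mem_support) (hT.isAcyclic.not_adj_of_not_mem_support hp hmax hv)
  have hvb : 2 ≤ T.dist v b := hT.connected.one_lt_dist_of_ne_of_not_adj
    (hne p.end_mem_support)
    (hT.isAcyclic.not_adj_of_not_mem_support hp.reverse (by simpa using hmax) (by simpa using hv))
  by_cases h3 : 3 ≤ p.length
  · exact not_singletonsCoalesce_of_dist hva hvb (hlen ▸ h3)
  have h2 : p.length = 2 := by have := hmax v a; omega
  have ham : T.Adj a (p.getVert 1) := by simpa using p.adj_getVert_succ (i := 0) (by omega)
  have hmb : T.Adj (p.getVert 1) b := by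
    simpa [← h2] using p.adj_getVert_succ (i := 1) (by omega)
  exact hT.not_singletonsCoalesce_of_diam_two (h2 ▸ hmax) ham hmb (hlen.trans h2)
    (hne p.start_mem_support) (hne (p.getVert_mem_support 1)) (hne p.end_mem_support)

theorem IsTree.card_le_four_and_nonempty_iso_pathGraph [Fintype V] (hT : T.IsTree)
    (hG : SingletonsCoalesce T) :
    Fintype.card V ≤ 4 ∧ Nonempty (T ≃g pathGraph (Fintype.card V)) := by
  have := hT.connected.nonempty
  obtain ⟨⟨a, b⟩, hab⟩ := Finite.exists_max fun x : V × V => T.dist x.1 x.2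
  obtain ⟨p, hp, hlen⟩ := hT.connected.exists_path_of_dist a b
  have hmax : ∀ x y, T.dist x y ≤ p.length := fun x y => hlen ▸ hab (x, y)
  have hspan : ∀ v, v ∈ p.support := fun v => by_contra fun hv =>
    hT.not_singletonsCoalesce_of_not_mem_support hp hmax hv hG
  have h3 : p.length ≤ 3 := by
    by_contra h
    exact not_singletonsCoalesce_of_four_le_dist (a := a) (b := b) (by omega) hG
  obtain ⟨e⟩ := p.nonempty_iso_pathGraph_of_length_eq_dist hlen hspan
  have hcard : Fintype.card V = p.length + 1 := by simpa using Fintype.card_congr e.toEquiv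
  rw [hcard]
  exact ⟨by omega, ⟨e⟩⟩

end Tree

end SimpleGraph

theorem stmt7 {V : Type*} [Fintype V] (T : SimpleGraph V) (hT : T.IsTree) :
    coalitionNumber T = Fintype.card V ↔
      Fintype.card V ≤ 4 ∧
        Nonempty (T ≃g SimpleGraph.pathGraph (Fintype.card V)) := by
  rw [coalitionNumber_eq_card_iff]
  refine ⟨hT.card_le_four_and_nonempty_iso_pathGraph, ?_⟩
  rintro ⟨hn, ⟨e⟩⟩
  exact (singletonsCoalesce_pathGraph hn).of_iso e
end

section
/- For every integer k ≥ 4, there exists a coalition partition Ψ of the path P_k with exactly two parts, and the corresponding coalition graph CG(P_k, Ψ) is isomorphic to K_2. -/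
open SimpleGraph

attribute [local instance] Classical.propDecidable

/-! Split `P_k` into `A = {0, 1}` and its complement. Vertex `3` has no neighbour in `A` and
vertex `0` has none in `Aᶜ`, so neither part dominates, while `A ∪ Aᶜ` is everything: the two
parts form a coalition, which makes `{A, Aᶜ}` a coalition partition with coalition graph `K_2`. -/

theorem Set.Nonempty.ne_compl {α : Type*} {s : Set α} (h : s.Nonempty) : s ≠ sᶜ := by
  obtain ⟨x, hx⟩ := h
  intro hs
  exact (hs ▸ hx : x ∈ sᶜ) hx

theorem Coalition.symm {V : Type*} {G : SimpleGraph V} {A B : Set V} (h : Coalition G A B) :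
    Coalition G B A :=
  ⟨h.1.symm, h.2.2.1, h.2.1, by rw [Set.union_comm]; exact h.2.2.2⟩

theorem coalition_compl {V : Type*} {G : SimpleGraph V} {A : Set V}
    (hA : ¬ Dominates G A) (hAc : ¬ Dominates G Aᶜ) : Coalition G A Aᶜ :=
  ⟨disjoint_compl_right, hA, hAc, fun v hv => by simp at hv⟩

theorem coalition_of_mem_pair_compl {V : Type*} {G : SimpleGraph V} {A : Set V}
    (hA : ¬ Dominates G A) (hAc : ¬ Dominates G Aᶜ) :
    ∀ X ∈ ({A, Aᶜ} : Finset (Set V)), ∀ Y ∈ ({A, Aᶜ} : Finset (Set V)), X ≠ Y →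
      Coalition G X Y := by
  simp only [Finset.mem_insert, Finset.mem_singleton]
  rintro X (rfl | rfl) Y (rfl | rfl) hXY
  all_goals first
    | exact absurd rfl hXY | exact coalition_compl hA hAc | exact (coalition_compl hA hAc).symm

theorem isCoalitionPartition_pair_compl {V : Type*} {G : SimpleGraph V} {A : Set V}
    (hne : A.Nonempty) (hcne : Aᶜ.Nonempty) (hA : ¬ Dominates G A) (hAc : ¬ Dominates G Aᶜ) :
    IsCoalitionPartition G {A, Aᶜ} := by
  have hcoalition := coalition_of_mem_pair_compl hA hAc
  refine ⟨?_, fun X hX Y hY hXY => (hcoalition X hX Y hY hXY).1, fun v => ?_, ?_⟩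
  · simp only [Finset.mem_insert, Finset.mem_singleton, forall_eq_or_imp, forall_eq]
    exact ⟨hne, hcne⟩
  · by_cases hv : v ∈ A
    · exact ⟨A, by simp, hv⟩
    · exact ⟨Aᶜ, by simp, hv⟩
  · have hAAc : A ≠ Aᶜ := hne.ne_compl
    simp only [Finset.mem_insert, Finset.mem_singleton, forall_eq_or_imp, forall_eq]
    exact ⟨Or.inr ⟨hA, Aᶜ, by simp, hAAc.symm, coalition_compl hA hAc⟩,
      Or.inr ⟨hAc, A, by simp, hAAc, (coalition_compl hA hAc).symm⟩⟩

theorem coalitionGraph_eq_top {V : Type*} {G : SimpleGraph V} {P : Finset (Set V)}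
    (h : ∀ A ∈ P, ∀ B ∈ P, A ≠ B → Coalition G A B) : coalitionGraph G P = ⊤ := by
  ext X Y
  exact ⟨fun hXY => (coalitionGraph G P).ne_of_adj hXY,
    fun hXY => h X.1 X.2 Y.1 Y.2 (Subtype.coe_ne_coe.mpr hXY)⟩

theorem nonempty_coalitionGraph_iso_top {V : Type*} {G : SimpleGraph V} {P : Finset (Set V)}
    {n : ℕ} (h : ∀ A ∈ P, ∀ B ∈ P, A ≠ B → Coalition G A B) (hP : P.card = n) :
    Nonempty (coalitionGraph G P ≃g (⊤ : SimpleGraph (Fin n))) := by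
  rw [coalitionGraph_eq_top h]
  exact ⟨Iso.completeGraph (Finset.equivFinOfCardEq hP)⟩

theorem pathGraph_not_dominates_le_one {k : ℕ} (hk : 4 ≤ k) :
    ¬ Dominates (pathGraph k) {i : Fin k | i.val ≤ 1} := by
  intro h
  obtain ⟨u, hu, hadj⟩ := h ⟨3, by omega⟩ (by simp)
  rw [pathGraph_adj] at hadj
  simp only [Set.mem_ofPred_eq] at hu
  simp only at hadj
  omega

theorem pathGraph_not_dominates_compl_le_one {k : ℕ} (hk : 4 ≤ k) :
    ¬ Dominates (pathGraph k) {i : Fin k | i.val ≤ 1}ᶜ := by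
  intro h
  obtain ⟨u, hu, hadj⟩ := h ⟨0, by omega⟩ (by simp)
  rw [pathGraph_adj] at hadj
  simp only [Set.mem_compl_iff, Set.mem_ofPred_eq] at hu
  simp only at hadj
  omega

theorem stmt11 (k : ℕ) (hk : 4 ≤ k) :
    ∃ P : Finset (Set (Fin k)),
      IsCoalitionPartition (SimpleGraph.pathGraph k) P ∧ P.card = 2 ∧
      Nonempty ((coalitionGraph (SimpleGraph.pathGraph k) P) ≃g
        (⊤ : SimpleGraph (Fin 2))) := by
  set A : Set (Fin k) := {i | i.val ≤ 1}
  have hA := pathGraph_not_dominates_le_one hk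
  have hAc := pathGraph_not_dominates_compl_le_one hk
  have hne : A.Nonempty := ⟨⟨0, by omega⟩, by simp [A]⟩
  have hcne : Aᶜ.Nonempty := ⟨⟨2, by omega⟩, by simp [A]⟩
  have hcard : ({A, Aᶜ} : Finset (Set (Fin k))).card = 2 := Finset.card_pair hne.ne_compl
  exact ⟨{A, Aᶜ}, isCoalitionPartition_pair_compl hne hcne hA hAc, hcard,
    nonempty_coalitionGraph_iso_top (coalition_of_mem_pair_compl hA hAc) hcard⟩
end

section
/- For every integer k ≥ 10, there exists a coalition partition Ψ of the path P_k with six parts whose coalition graph CG(P_k, Ψ) is isomorphic to the double star S(2,2). -/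
open SimpleGraph

attribute [local instance] Classical.propDecidable

/-- The double star `S(2,2)`: adjacent centers `0` and `1`, with `0` having leaf
neighbors `2, 3` and `1` having leaf neighbors `4, 5`. -/
def doubleStar22 : SimpleGraph (Fin 6) :=
  SimpleGraph.fromEdgeSet {s(0, 1), s(0, 2), s(0, 3), s(1, 4), s(1, 5)}

/-
Label the vertices `0, 1, 2, …` of `P_k` by `0 1 2 3 1 0 4 5 0 1 0 1 …` and take the six label
classes as the parts. The labels on the closed neighbourhood of any vertex contain `{0, 1}`,
`{1, 2, 3}` or `{0, 4, 5}`, and those of the vertices `0`, `2`, `6` are exactly these sets; so the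
classes with labels in `T` together dominate `P_k` iff `T` meets all three sets. Hence no class
dominates alone, and two classes dominate together exactly along the edges `01, 02, 03, 14, 15`
of `S(2,2)`. The neighbourhood of vertex `8` needs vertex `9`, whence `k ≥ 10`.
-/

section Fibers

variable {V ι : Type*}

lemma Coalition.ne {G : SimpleGraph V} {A B : Set V} (h : Coalition G A B) : A ≠ B := by
  rintro rfl
  exact h.2.1 (by simpa using h.2.2.2)

lemma dominates_preimage_iff (G : SimpleGraph V) (f : V → ι) (T : Set ι) :
    Dominates G (f ⁻¹' T) ↔ ∀ v, ∃ u, (u = v ∨ G.Adj u v) ∧ f u ∈ T := by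
  refine ⟨fun h v => ?_, fun h v hv => ?_⟩
  · by_cases hv : f v ∈ T
    · exact ⟨v, Or.inl rfl, hv⟩
    · obtain ⟨u, hu, huv⟩ := h v hv
      exact ⟨u, Or.inr huv, hu⟩
  · obtain ⟨u, rfl | huv, hu⟩ := h v
    · exact absurd hu hv
    · exact ⟨u, hu, huv⟩

lemma coalition_preimage_singleton_iff (G : SimpleGraph V) (f : V → ι) (i j : ι) :
    Coalition G (f ⁻¹' {i}) (f ⁻¹' {j}) ↔
      ¬ Dominates G (f ⁻¹' {i}) ∧ ¬ Dominates G (f ⁻¹' {j}) ∧ Dominates G (f ⁻¹' {i, j}) := by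
  rw [Set.insert_eq, Set.preimage_union]
  refine ⟨fun h => h.2, fun ⟨hi, hj, hij⟩ => ⟨?_, hi, hj, hij⟩⟩
  obtain rfl | hne := eq_or_ne i j
  · exact absurd (by rwa [Set.union_self] at hij) hi
  · exact Set.disjoint_singleton.mpr hne |>.preimage f

lemma preimage_singleton_injective {f : V → ι} (hf : f.Surjective) :
    Function.Injective fun i => f ⁻¹' {i} :=
  (Set.preimage_injective.mpr hf).comp Set.singleton_injective

variable [Fintype ι]

noncomputable def fiberPartition (f : V → ι) : Finset (Set V) :=
  Finset.univ.image fun i => f ⁻¹' {i}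

lemma card_fiberPartition {f : V → ι} (hf : f.Surjective) :
    (fiberPartition f).card = Fintype.card ι :=
  Finset.card_image_of_injective _ (preimage_singleton_injective hf)

lemma isCoalitionPartition_fiberPartition (G : SimpleGraph V) {f : V → ι} (hf : f.Surjective)
    (h : ∀ i, ∃ j, Coalition G (f ⁻¹' {i}) (f ⁻¹' {j})) :
    IsCoalitionPartition G (fiberPartition f) := by
  simp only [IsCoalitionPartition, fiberPartition, Finset.mem_image, Finset.mem_univ, true_and,
    forall_exists_index, forall_apply_eq_imp_iff, exists_exists_eq_and]
  refine ⟨fun i => ?_, fun i j hij => ?_, fun v => ⟨f v, rfl⟩, fun i => Or.inr ?_⟩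
  · obtain ⟨v, hv⟩ := hf i
    exact ⟨v, hv⟩
  · refine Set.disjoint_singleton.mpr ?_ |>.preimage f
    rintro rfl
    exact hij rfl
  · obtain ⟨j, hij⟩ := h i
    exact ⟨hij.2.1, j, hij.ne.symm, hij⟩

noncomputable def fiberPartitionEquiv {f : V → ι} (hf : f.Surjective) :
    ι ≃ {A // A ∈ fiberPartition f} :=
  Equiv.ofBijective (fun i => ⟨f ⁻¹' {i}, Finset.mem_image_of_mem _ (Finset.mem_univ i)⟩)
    ⟨fun i j hij => preimage_singleton_injective hf (congrArg Subtype.val hij), by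
      rintro ⟨A, hA⟩
      obtain ⟨i, -, rfl⟩ := Finset.mem_image.mp hA
      exact ⟨i, rfl⟩⟩

noncomputable def coalitionGraphFiberPartitionIso (G : SimpleGraph V) {f : V → ι}
    (hf : f.Surjective) (H : SimpleGraph ι)
    (hH : ∀ i j, Coalition G (f ⁻¹' {i}) (f ⁻¹' {j}) ↔ H.Adj i j) :
    coalitionGraph G (fiberPartition f) ≃g H :=
  RelIso.symm { fiberPartitionEquiv hf with map_rel_iff' := hH _ _ }

end Fibers

def doubleStarLabel : ℕ → Fin 6
  | 0 => 0 | 1 => 1 | 2 => 2 | 3 => 3 | 4 => 1 | 5 => 0 | 6 => 4 | 7 => 5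
  | n + 8 => if n % 2 = 0 then 0 else 1

lemma exists_near_doubleStarLabel_mem {T : Set (Fin 6)} (h01 : 0 ∈ T ∨ 1 ∈ T)
    (h123 : 1 ∈ T ∨ 2 ∈ T ∨ 3 ∈ T) (h045 : 0 ∈ T ∨ 4 ∈ T ∨ 5 ∈ T) (n : ℕ) :
    ∃ m ≤ max n 9, (m = n ∨ m + 1 = n ∨ n + 1 = m) ∧ doubleStarLabel m ∈ T := by
  rcases lt_or_ge n 9 with hn | hn
  · obtain h | h | h | h | h | h | h | h | h :
        n = 0 ∨ n = 1 ∨ n = 2 ∨ n = 3 ∨ n = 4 ∨ n = 5 ∨ n = 6 ∨ n = 7 ∨ n = 8 := by omega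
    all_goals
      rcases h01 with h01 | h01 <;> rcases h123 with h123 | h123 | h123 <;>
      rcases h045 with h045 | h045 | h045 <;>
      first
        | exact ⟨n - 1, by omega, by omega, by simpa [h, doubleStarLabel]⟩
        | exact ⟨n, by omega, by omega, by simpa [h, doubleStarLabel]⟩
        | exact ⟨n + 1, by omega, by omega, by simpa [h, doubleStarLabel]⟩
  · obtain ⟨n, rfl⟩ := Nat.exists_eq_add_of_le' hn
    rcases Nat.mod_two_eq_zero_or_one n with hn | hn <;> rcases h01 with h01 | h01 <;>
      first
        | exact ⟨n + 8, by omega, by omega, by simpa [doubleStarLabel, hn]⟩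
        | exact ⟨n + 9, le_max_left _ _, Or.inl rfl, by simpa [doubleStarLabel, Nat.add_mod, hn]⟩

lemma eq_or_pathGraph_adj_iff {k : ℕ} {u v : Fin k} :
    (u = v ∨ (pathGraph k).Adj u v) ↔ (u.val = v.val ∨ u.val + 1 = v.val ∨ v.val + 1 = u.val) := by
  rw [pathGraph_adj, Fin.ext_iff]

lemma dominates_preimage_doubleStarLabel_iff {k : ℕ} (hk : 10 ≤ k) (T : Set (Fin 6)) :
    Dominates (pathGraph k) ((doubleStarLabel ∘ Fin.val) ⁻¹' T) ↔
      (0 ∈ T ∨ 1 ∈ T) ∧ (1 ∈ T ∨ 2 ∈ T ∨ 3 ∈ T) ∧ (0 ∈ T ∨ 4 ∈ T ∨ 5 ∈ T) := by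
  simp only [dominates_preimage_iff, eq_or_pathGraph_adj_iff, Function.comp_apply]
  constructor
  · intro h
    have near (n : ℕ) (hn : n < k) :
        ∃ m, (m = n ∨ m + 1 = n ∨ n + 1 = m) ∧ doubleStarLabel m ∈ T := by
      obtain ⟨u, hu, hT⟩ := h ⟨n, hn⟩
      exact ⟨u, hu, hT⟩
    obtain ⟨m₀, h₀, hT₀⟩ := near 0 (by omega)
    obtain ⟨m₂, h₂, hT₂⟩ := near 2 (by omega)
    obtain ⟨m₆, h₆, hT₆⟩ := near 6 (by omega)
    refine ⟨?_, ?_, ?_⟩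
    · obtain rfl | rfl : m₀ = 0 ∨ m₀ = 1 := by omega
      all_goals simp_all [doubleStarLabel]
    · obtain rfl | rfl | rfl : m₂ = 1 ∨ m₂ = 2 ∨ m₂ = 3 := by omega
      all_goals simp_all [doubleStarLabel]
    · obtain rfl | rfl | rfl : m₆ = 5 ∨ m₆ = 6 ∨ m₆ = 7 := by omega
      all_goals simp_all [doubleStarLabel]
  · rintro ⟨h01, h123, h045⟩ v
    obtain ⟨m, hm, hmv, hT⟩ := exists_near_doubleStarLabel_mem h01 h123 h045 v
    exact ⟨⟨m, by omega⟩, hmv, hT⟩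

lemma doubleStarLabel_comp_val_surjective {k : ℕ} (hk : 8 ≤ k) :
    (doubleStarLabel ∘ Fin.val : Fin k → Fin 6).Surjective := by
  intro c
  fin_cases c
  exacts [⟨⟨0, by omega⟩, rfl⟩, ⟨⟨1, by omega⟩, rfl⟩, ⟨⟨2, by omega⟩, rfl⟩, ⟨⟨3, by omega⟩, rfl⟩,
    ⟨⟨6, by omega⟩, rfl⟩, ⟨⟨7, by omega⟩, rfl⟩]

lemma coalition_preimage_doubleStarLabel_iff {k : ℕ} (hk : 10 ≤ k) (i j : Fin 6) :
    Coalition (pathGraph k)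
        ((doubleStarLabel ∘ Fin.val) ⁻¹' {i}) ((doubleStarLabel ∘ Fin.val) ⁻¹' {j}) ↔
      doubleStar22.Adj i j := by
  simp only [coalition_preimage_singleton_iff, dominates_preimage_doubleStarLabel_iff hk,
    Set.mem_insert_iff, Set.mem_singleton_iff, doubleStar22, fromEdgeSet_adj, Sym2.eq_iff]
  fin_cases i <;> fin_cases j <;> simp

lemma doubleStar22_exists_adj (i : Fin 6) : ∃ j, doubleStar22.Adj i j := by
  simp only [doubleStar22, fromEdgeSet_adj, Set.mem_insert_iff, Set.mem_singleton_iff, Sym2.eq_iff]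
  fin_cases i <;> simp

theorem stmt17 (k : ℕ) (hk : 10 ≤ k) :
    ∃ P : Finset (Set (Fin k)),
      IsCoalitionPartition (SimpleGraph.pathGraph k) P ∧ P.card = 6 ∧
      Nonempty ((coalitionGraph (SimpleGraph.pathGraph k) P) ≃g doubleStar22) := by
  have hf := doubleStarLabel_comp_val_surjective (k := k) (by omega)
  refine ⟨fiberPartition (doubleStarLabel ∘ Fin.val), ?_, card_fiberPartition hf,
    ⟨coalitionGraphFiberPartitionIso _ hf _ (coalition_preimage_doubleStarLabel_iff hk)⟩⟩
  refine isCoalitionPartition_fiberPartition _ hf fun i => ?_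
  obtain ⟨j, hij⟩ := doubleStar22_exists_adj i
  exact ⟨j, (coalition_preimage_doubleStarLabel_iff hk i j).mpr hij⟩
end
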